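/- arXiv:2103.10748 — 4 statements merged into one kernel-verified Lean document; each statement's English description precedes it below -/
import Mathlib

section
/- Let ρ, σ be positive semidefinite operators on a finite-dimensional tensor product Hilbert space H_C ⊗ H_B, and suppose ρ has Schmidt number at most k, i.e., ρ admits a decomposition ρ = Σᵢ |φᵢ⟩⟨φᵢ| where each |φᵢ⟩ has Schmidt rank at most k. Then Tr[ρσ] ≤ k · Tr[ρ_B σ_B], where ρ_B = Tr_C(ρ) and σ_B = Tr_C(σ). -/
open Matrix BigOperators
open scoped ComplexOrder

/-- Partial trace over the first tensor factor `C`. -/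
noncomputable def ptraceC {C B : Type*} [Fintype C] (M : Matrix (C × B) (C × B) ℂ) :
    Matrix B B ℂ :=
  Matrix.of fun i j => ∑ c, M (c, i) (c, j)

/-- Rank-one operator `|φ⟩⟨φ|`. -/
noncomputable def outer {ι : Type*} (φ : ι → ℂ) : Matrix ι ι ℂ :=
  Matrix.of fun i j => φ i * star (φ j)

/-!
Both sides are bilinear in `(ρ, σ)`, and `σ`, like `ρ`, is a sum of rank-one projections, so it
suffices to compare `Tr[|φ⟩⟨φ| |ψ⟩⟨ψ|]` with `Tr[Tr_C|φ⟩⟨φ| Tr_C|ψ⟩⟨ψ|]`. Reshape `φ` and `ψ`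
into `C × B` matrices `M` and `N` and put `W = M Nᴴ`: the first quantity is `|tr W|²`, the
second is `tr (W Wᴴ)`, and `rank W ≤ rank M`, the Schmidt rank of `φ`. Finally
`|tr W|² ≤ rank W · tr (W Wᴴ)` is Cauchy–Schwarz for the Hilbert–Schmidt inner product,
applied to `tr W = ⟪P, W⟫` with `P` the orthogonal projection onto the range of `W`, whose
Hilbert–Schmidt norm squared is `tr P = rank W`.
-/

open ComplexConjugate

namespace Matrix
variable {m n : Type*} [Fintype m] [Fintype n] [DecidableEq m]

theorem norm_trace_mul_conjTranspose_sq_le (A B : Matrix m m ℂ) :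
    ‖(B * Aᴴ).trace‖ ^ 2 ≤ (A * Aᴴ).trace.re * (B * Bᴴ).trace.re := by
  let _ := toMatrixSeminormedAddCommGroup (1 : Matrix m m ℂ) PosSemidef.one
  let _ := toMatrixInnerProductSpace (1 : Matrix m m ℂ) PosSemidef.one
  have hinner (x y : Matrix m m ℂ) : inner ℂ x y = (y * xᴴ).trace := by
    show (y * 1 * xᴴ).trace = _
    rw [Matrix.mul_one]
  have hnorm (x : Matrix m m ℂ) : ‖x‖ ^ 2 = (x * xᴴ).trace.re := by
    rw [@norm_sq_eq_re_inner ℂ, hinner]; rfl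
  rw [← hinner, ← hnorm, ← hnorm, ← mul_pow]
  gcongr
  exact norm_inner_le_norm A B

theorem exists_isStarProjection_mul_eq_self_trace_eq_rank [DecidableEq n] (M : Matrix m n ℂ) :
    ∃ P : Matrix m m ℂ, IsStarProjection P ∧ P * M = M ∧ P.trace = M.rank := by
  obtain ⟨K, hK⟩ : ∃ K, LinearMap.range (toEuclideanLin M) = K := ⟨_, rfl⟩
  let e := (toEuclideanCLM (n := m) (𝕜 := ℂ)).symm
  have hP : toEuclideanLin (e K.starProjection) = K.starProjection := by
    rw [← coe_toEuclideanCLM_eq_toEuclideanLin, StarAlgEquiv.apply_symm_apply]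
  refine ⟨e K.starProjection, isStarProjection_starProjection.map e.toStarAlgHom, ?_, ?_⟩
  · apply toEuclideanLin.injective
    ext x : 1
    rw [toLpLin_mul_same, LinearMap.comp_apply, hP, ContinuousLinearMap.coe_coe,
      K.starProjection_eq_self_iff, ← hK]
    exact LinearMap.mem_range_self _ x
  · have hproj : LinearMap.IsProj K (K.starProjection : _ →ₗ[ℂ] _) :=
      ⟨K.starProjection_apply_mem, fun x hx => K.starProjection_eq_self_iff.mpr hx⟩
    let b := (EuclideanSpace.basisFun m ℂ).toBasis
    rw [rank_eq_finrank_range_toLin M b (EuclideanSpace.basisFun n ℂ).toBasis,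
      ← toEuclideanLin_eq_toLin_orthonormal, hK, ← hproj.trace, ← hP,
      toEuclideanLin_eq_toLin_orthonormal, LinearMap.trace_eq_matrix_trace ℂ b,
      LinearMap.toMatrix_toLin]

theorem norm_trace_sq_le_rank_mul (W : Matrix m m ℂ) :
    ‖W.trace‖ ^ 2 ≤ W.rank * (W * Wᴴ).trace.re := by
  obtain ⟨P, hP, hPW, htr⟩ := exists_isStarProjection_mul_eq_self_trace_eq_rank W
  have hPH : Pᴴ = P := hP.isSelfAdjoint.star_eq
  have htrW : (W * Pᴴ).trace = W.trace := by rw [hPH, trace_mul_comm, hPW]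
  have htrP : (P * Pᴴ).trace.re = W.rank := by
    rw [hPH, hP.isIdempotentElem.eq, htr, Complex.natCast_re]
  simpa only [htrW, htrP] using norm_trace_mul_conjTranspose_sq_le P W

end Matrix

theorem outer_eq_vecMulVec {ι : Type*} (φ : ι → ℂ) : outer φ = vecMulVec φ (star φ) := rfl

section PartialTrace
variable {C B : Type*} [Fintype C]

theorem ptraceC_sum {ι : Type*} (s : Finset ι) (M : ι → Matrix (C × B) (C × B) ℂ) :
    ptraceC (∑ i ∈ s, M i) = ∑ i ∈ s, ptraceC (M i) := by
  ext b b'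
  simp only [ptraceC, of_apply, Matrix.sum_apply]
  exact Finset.sum_comm

theorem ptraceC_outer (φ : C × B → ℂ) :
    ptraceC (outer φ) = ((of (Function.curry φ))ᴴ * of (Function.curry φ))ᵀ := by
  ext b b'
  simp [ptraceC, outer, mul_apply, mul_comm]

theorem rank_ptraceC_outer [Fintype B] (φ : C × B → ℂ) :
    (ptraceC (outer φ)).rank = (of (Function.curry φ)).rank := by
  rw [ptraceC_outer, rank_transpose, rank_conjTranspose_mul_self]

theorem trace_outer_mul_outer [Fintype B] (φ ψ : C × B → ℂ) :
    (outer φ * outer ψ).trace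
      = ‖(of (Function.curry φ) * (of (Function.curry ψ))ᴴ).trace‖ ^ 2 := by
  have h : (of (Function.curry φ) * (of (Function.curry ψ))ᴴ).trace
      = ∑ x, φ x * conj (ψ x) := by
    simp [trace, mul_apply, Fintype.sum_prod_type]
  rw [h, ← Complex.mul_conj', map_sum]
  simp only [trace, diag, mul_apply, outer, of_apply, Finset.sum_mul_sum, map_mul]
  refine Finset.sum_congr rfl fun x _ => Finset.sum_congr rfl fun y _ => ?_
  simp only [Complex.star_def, Complex.conj_conj]
  ring

theorem trace_ptraceC_outer_mul_ptraceC_outer [Fintype B] (φ ψ : C × B → ℂ) :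
    (ptraceC (outer φ) * ptraceC (outer ψ)).trace
      = (of (Function.curry φ) * (of (Function.curry ψ))ᴴ
          * (of (Function.curry φ) * (of (Function.curry ψ))ᴴ)ᴴ).trace := by
  rw [ptraceC_outer, ptraceC_outer, ← transpose_mul, trace_transpose, conjTranspose_mul,
    conjTranspose_conjTranspose]
  simp only [← Matrix.mul_assoc]
  rw [trace_mul_comm]
  simp only [Matrix.mul_assoc]

theorem trace_outer_mul_outer_le [Fintype B] [DecidableEq C] (φ ψ : C × B → ℂ) (k : ℕ)
    (hk : (ptraceC (outer φ)).rank ≤ k) :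
    (outer φ * outer ψ).trace.re
      ≤ k * (ptraceC (outer φ) * ptraceC (outer ψ)).trace.re := by
  rw [trace_outer_mul_outer, trace_ptraceC_outer_mul_ptraceC_outer]
  set W := of (Function.curry φ) * (of (Function.curry ψ))ᴴ
  have hW : W.rank ≤ k := (rank_mul_le_left _ _).trans (rank_ptraceC_outer φ ▸ hk)
  calc ((‖W.trace‖ : ℂ) ^ 2).re = ‖W.trace‖ ^ 2 := by norm_cast
    _ ≤ W.rank * (W * Wᴴ).trace.re := W.norm_trace_sq_le_rank_mul
    _ ≤ k * (W * Wᴴ).trace.re := by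
        gcongr
        exact (Complex.nonneg_iff.mp (posSemidef_self_mul_conjTranspose W).trace_nonneg).1

end PartialTrace

theorem schmidt_number_trace_bound_general {C B : Type*} [Fintype C] [Fintype B]
    [DecidableEq C]
    (ρ σ : Matrix (C × B) (C × B) ℂ) (k : ℕ)
    (hσ : σ.PosSemidef)
    (hSchmidt : ∃ (m : ℕ) (v : Fin m → C × B → ℂ),
      ρ = ∑ i, outer (v i) ∧ ∀ i, (ptraceC (outer (v i))).rank ≤ k) :
    ((ρ * σ).trace).re ≤ (k : ℝ) * ((ptraceC ρ * ptraceC σ).trace).re := by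
  obtain ⟨m, v, rfl, hv⟩ := hSchmidt
  obtain ⟨n, w, rfl⟩ := posSemidef_iff_eq_sum_vecMulVec.mp hσ
  simp only [← outer_eq_vecMulVec]
  rw [ptraceC_sum, ptraceC_sum, Finset.sum_mul_sum, Finset.sum_mul_sum]
  simp only [trace_sum, Complex.re_sum, Finset.mul_sum]
  gcongr with i _ j _
  exact trace_outer_mul_outer_le (v i) (w j) k (hv i)

/-- Lemma 1: if the positive semidefinite operator `ρ` on `H_C ⊗ H_B` has
Schmidt number at most `k`, i.e. `ρ = Σᵢ |φᵢ⟩⟨φᵢ|` with each `φᵢ` of Schmidt rank at most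
`k`, then for any positive semidefinite `σ`, `Tr[ρσ] ≤ k · Tr[ρ_B σ_B]`. -/
theorem schmidt_number_trace_bound {C B : Type*} [Fintype C] [Fintype B]
    [DecidableEq C] [DecidableEq B]
    (ρ σ : Matrix (C × B) (C × B) ℂ) (k : ℕ)
    (hρ : ρ.PosSemidef) (hσ : σ.PosSemidef)
    (hSchmidt : ∃ (m : ℕ) (v : Fin m → C × B → ℂ),
      ρ = ∑ i, outer (v i) ∧ ∀ i, (ptraceC (outer (v i))).rank ≤ k) :
    ((ρ * σ).trace).re ≤ (k : ℝ) * ((ptraceC ρ * ptraceC σ).trace).re :=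
  schmidt_number_trace_bound_general ρ σ k hσ hSchmidt
end

section
/- Let |φ⟩ = Σᵢ √pᵢ |αᵢ⟩|βᵢ⟩ and |ψ⟩ = Σⱼ √qⱼ |α'ⱼ⟩|β'ⱼ⟩ be Schmidt decompositions of unit vectors in H_C ⊗ H_B, where the first sum runs over at most k indices. Then |⟨φ|ψ⟩|² ≤ k · Σᵢⱼ pᵢ qⱼ |⟨βᵢ|β'ⱼ⟩|². -/
/-!
Expanding both Schmidt decompositions gives `⟨φ|ψ⟩ = Σᵢⱼ √pᵢ √qⱼ ⟨αᵢ|α'ⱼ⟩ ⟨βᵢ|β'ⱼ⟩`.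
Cauchy–Schwarz over the index pairs `(i, j)` splits off `Σᵢⱼ |⟨αᵢ|α'ⱼ⟩|²`, and by Bessel's
inequality for the orthonormal family `α'` each row `Σⱼ |⟨αᵢ|α'ⱼ⟩|²` is at most `‖αᵢ‖² = 1`,
so that factor is at most `k`.
-/

open Finset WithLp

theorem norm_sum_mul_sq_le {ι R : Type*} [SeminormedRing R] (s : Finset ι) (f g : ι → R) :
    ‖∑ i ∈ s, f i * g i‖ ^ 2 ≤ (∑ i ∈ s, ‖f i‖ ^ 2) * ∑ i ∈ s, ‖g i‖ ^ 2 := by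
  have htri : ‖∑ i ∈ s, f i * g i‖ ≤ ∑ i ∈ s, ‖f i‖ * ‖g i‖ :=
    (norm_sum_le _ _).trans (sum_le_sum fun i _ => norm_mul_le _ _)
  calc ‖∑ i ∈ s, f i * g i‖ ^ 2 ≤ (∑ i ∈ s, ‖f i‖ * ‖g i‖) ^ 2 :=
        pow_le_pow_left₀ (norm_nonneg _) htri 2
    _ ≤ _ := sum_mul_sq_le_sq_mul_sq s _ _

section Overlap

variable {ι κ 𝕜 : Type*} [Fintype ι]

theorem sum_star_mul_sum_prod_eq {R : Type*} [CommSemiring R] [StarRing R] {γ δ : Type*}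
    [Fintype κ] [Fintype γ] [Fintype δ]
    (a : ι → R) (b : κ → R) (u : ι → γ → R) (v : ι → δ → R) (u' : κ → γ → R) (v' : κ → δ → R) :
    ∑ x : γ × δ, star (∑ i, a i * u i x.1 * v i x.2) * ∑ j, b j * u' j x.1 * v' j x.2 =
      ∑ i, ∑ j, star (a i) * b j *
        ((∑ c, star (u i c) * u' j c) * ∑ d, star (v i d) * v' j d) := by
  have hterm : ∀ x : γ × δ, star (∑ i, a i * u i x.1 * v i x.2) * ∑ j, b j * u' j x.1 * v' j x.2 =
      ∑ i, ∑ j, star (a i) * b j * ((star (u i x.1) * u' j x.1) * (star (v i x.2) * v' j x.2)) := by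
    intro x
    simp only [star_sum, star_mul', sum_mul_sum]
    exact sum_congr rfl fun i _ => sum_congr rfl fun j _ => by ring
  simp only [hterm]
  rw [sum_comm]
  refine sum_congr rfl fun i _ => ?_
  rw [sum_comm]
  refine sum_congr rfl fun j _ => ?_
  rw [← mul_sum, sum_mul_sum, Fintype.sum_prod_type]

variable [RCLike 𝕜]

theorem inner_toLp_eq_sum_star_mul (x y : ι → 𝕜) :
    inner 𝕜 (toLp 2 x : EuclideanSpace 𝕜 ι) (toLp 2 y) = ∑ c, star (x c) * y c := by
  simp [EuclideanSpace.inner_toLp_toLp, dotProduct, mul_comm]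

theorem sum_star_mul_self_eq (x : ι → 𝕜) : ∑ c, star (x c) * x c = ((∑ c, ‖x c‖ ^ 2 : ℝ) : 𝕜) := by
  push_cast
  exact sum_congr rfl fun c _ => RCLike.conj_mul (x c)

theorem sum_norm_sum_star_mul_sq_le_of_orthonormal [Fintype κ] [DecidableEq κ] (v : κ → ι → 𝕜)
    (hv : ∀ j j', ∑ c, star (v j c) * v j' c = if j = j' then 1 else 0) (x : ι → 𝕜) :
    ∑ j, ‖∑ c, star (x c) * v j c‖ ^ 2 ≤ ∑ c, ‖x c‖ ^ 2 := by
  have hon : Orthonormal 𝕜 fun j => (toLp 2 (v j) : EuclideanSpace 𝕜 ι) :=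
    orthonormal_iff_ite.2 fun j j' => (inner_toLp_eq_sum_star_mul _ _).trans (hv j j')
  have := hon.sum_inner_products_le (s := univ) (toLp 2 x)
  simp_rw [norm_inner_symm (𝕜 := 𝕜) (toLp 2 (v _)), inner_toLp_eq_sum_star_mul,
    EuclideanSpace.norm_sq_eq] at this
  exact this

end Overlap

theorem schmidt_overlap_bound_general {C B : Type*} [Fintype C] [Fintype B]
    (k m : ℕ)
    (p : Fin k → ℝ) (q : Fin m → ℝ)
    (hp0 : ∀ i, 0 ≤ p i) (hq0 : ∀ j, 0 ≤ q j)
    (α : Fin k → C → ℂ) (β : Fin k → B → ℂ)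
    (α' : Fin m → C → ℂ) (β' : Fin m → B → ℂ)
    (hα : ∀ i i', ∑ c, star (α i c) * α i' c = if i = i' then 1 else 0)
    (hα' : ∀ j j', ∑ c, star (α' j c) * α' j' c = if j = j' then 1 else 0)
    (φ ψ : C × B → ℂ)
    (hφ : ∀ x : C × B, φ x = ∑ i, (Real.sqrt (p i) : ℂ) * α i x.1 * β i x.2)
    (hψ : ∀ x : C × B, ψ x = ∑ j, (Real.sqrt (q j) : ℂ) * α' j x.1 * β' j x.2) :
    ‖∑ x, star (φ x) * ψ x‖ ^ 2 ≤
      (k : ℝ) * ∑ i, ∑ j, p i * q j * ‖∑ b, star (β i b) * β' j b‖ ^ 2 := by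
  set A : Fin k → Fin m → ℂ := fun i j => ∑ c, star (α i c) * α' j c
  set Bm : Fin k → Fin m → ℂ := fun i j => ∑ b, star (β i b) * β' j b
  have hrow (i : Fin k) : ∑ j, ‖A i j‖ ^ 2 ≤ 1 := by
    have hunit : ∑ c, ‖α i c‖ ^ 2 = 1 := by
      have h := hα i i
      rw [if_pos rfl, sum_star_mul_self_eq] at h
      exact RCLike.ofReal_injective (h.trans RCLike.ofReal_one.symm)
    exact hunit ▸ sum_norm_sum_star_mul_sq_le_of_orthonormal α' hα' (α i)
  have hweight (i : Fin k) (j : Fin m) :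
      ‖(Real.sqrt (p i) * Real.sqrt (q j) : ℂ) * Bm i j‖ ^ 2 = p i * q j * ‖Bm i j‖ ^ 2 := by
    rw [norm_mul, mul_pow, ← Complex.ofReal_mul, Complex.norm_real, Real.norm_eq_abs, sq_abs,
      mul_pow, Real.sq_sqrt (hp0 i), Real.sq_sqrt (hq0 j)]
  have hoverlap : ∑ x, star (φ x) * ψ x =
      ∑ ij : Fin k × Fin m,
        A ij.1 ij.2 * ((Real.sqrt (p ij.1) * Real.sqrt (q ij.2) : ℂ) * Bm ij.1 ij.2) := by
    rw [show φ = _ from funext hφ, show ψ = _ from funext hψ, sum_star_mul_sum_prod_eq,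
      Fintype.sum_prod_type]
    refine sum_congr rfl fun i _ => sum_congr rfl fun j _ => ?_
    simp only [A, Bm, Complex.star_def, Complex.conj_ofReal]
    ring
  calc ‖∑ x, star (φ x) * ψ x‖ ^ 2
      ≤ (∑ ij : Fin k × Fin m, ‖A ij.1 ij.2‖ ^ 2) *
          ∑ ij : Fin k × Fin m, ‖(Real.sqrt (p ij.1) * Real.sqrt (q ij.2) : ℂ) * Bm ij.1 ij.2‖ ^ 2 :=
        hoverlap ▸ norm_sum_mul_sq_le _ _ _
    _ ≤ (k : ℝ) * ∑ i, ∑ j, p i * q j * ‖Bm i j‖ ^ 2 := by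
        simp only [Fintype.sum_prod_type, hweight]
        gcongr
        · exact sum_nonneg fun i _ => sum_nonneg fun j _ =>
            mul_nonneg (mul_nonneg (hp0 i) (hq0 j)) (sq_nonneg _)
        · simpa using sum_le_sum fun i (_ : i ∈ univ) => hrow i

/-- Schmidt-decomposed unit vectors
`|φ⟩ = Σᵢ √pᵢ |αᵢ⟩|βᵢ⟩` (at most `k` terms) and `|ψ⟩ = Σⱼ √qⱼ |α'ⱼ⟩|β'ⱼ⟩` satisfy
`|⟨φ|ψ⟩|² ≤ k · Σᵢⱼ pᵢ qⱼ |⟨βᵢ|β'ⱼ⟩|²`. -/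
theorem schmidt_overlap_bound {C B : Type*} [Fintype C] [Fintype B]
    (k m : ℕ)
    (p : Fin k → ℝ) (q : Fin m → ℝ)
    (hp0 : ∀ i, 0 ≤ p i) (hq0 : ∀ j, 0 ≤ q j)
    (hp1 : ∑ i, p i = 1) (hq1 : ∑ j, q j = 1)
    (α : Fin k → C → ℂ) (β : Fin k → B → ℂ)
    (α' : Fin m → C → ℂ) (β' : Fin m → B → ℂ)
    (hα : ∀ i i', ∑ c, star (α i c) * α i' c = if i = i' then 1 else 0)
    (hβ : ∀ i i', ∑ b, star (β i b) * β i' b = if i = i' then 1 else 0)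
    (hα' : ∀ j j', ∑ c, star (α' j c) * α' j' c = if j = j' then 1 else 0)
    (hβ' : ∀ j j', ∑ b, star (β' j b) * β' j' b = if j = j' then 1 else 0)
    (φ ψ : C × B → ℂ)
    (hφ : ∀ x : C × B, φ x = ∑ i, (Real.sqrt (p i) : ℂ) * α i x.1 * β i x.2)
    (hψ : ∀ x : C × B, ψ x = ∑ j, (Real.sqrt (q j) : ℂ) * α' j x.1 * β' j x.2) :
    ‖∑ x, star (φ x) * ψ x‖ ^ 2 ≤
      (k : ℝ) * ∑ i, ∑ j, p i * q j * ‖∑ b, star (β i b) * β' j b‖ ^ 2 :=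
  schmidt_overlap_bound_general k m p q hp0 hq0 α β α' β' hα hα' φ ψ hφ hψ
end

section
/- With the five states |τˣ⟩ = (U_x ⊗ 1)|φ_max⟩ for U₁ = (1−iσ_x)/√2, U₂ = 1, U₃ = σ_x, U₄ = σ_y, the value Tr|τ¹+τ²−τ³−τ⁴| + Tr|τ¹−τ²+τ³−τ⁴| equals 2(1+√5), where τˣ = |τˣ⟩⟨τˣ|. -/
open Matrix BigOperators
open scoped ComplexOrder

/-- The maximally entangled two-qubit state `(|00⟩+|11⟩)/√2`. -/
noncomputable def phiMax : Fin 2 × Fin 2 → ℂ :=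
  fun p => if p.1 = p.2 then ((Real.sqrt 2 : ℝ) : ℂ)⁻¹ else 0

def pauliX : Matrix (Fin 2) (Fin 2) ℂ := !![0, 1; 1, 0]
def pauliY : Matrix (Fin 2) (Fin 2) ℂ := !![0, -Complex.I; Complex.I, 0]

/-- Alice's unitaries `U₁ = (1−iσ_x)/√2, U₂ = 1, U₃ = σ_x, U₄ = σ_y`. -/
noncomputable def Urac : Fin 4 → Matrix (Fin 2) (Fin 2) ℂ :=
  ![((Real.sqrt 2 : ℝ) : ℂ)⁻¹ • (1 - Complex.I • pauliX), 1, pauliX, pauliY]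

/-- The states `|τˣ⟩ = (U_x ⊗ 1)|φ_max⟩`. -/
noncomputable def tauVec (x : Fin 4) : Fin 2 × Fin 2 → ℂ :=
  fun p => ∑ a, Urac x p.1 a * phiMax (a, p.2)

/-- The density operators `τˣ = |τˣ⟩⟨τˣ|`. -/
noncomputable def tauOp (x : Fin 4) : Matrix (Fin 2 × Fin 2) (Fin 2 × Fin 2) ℂ :=
  Matrix.of fun p q => tauVec x p * star (tauVec x q)

/-- The trace norm `Tr|A| = Tr √(AᴴA)` of a matrix. -/
noncomputable def traceNorm {n : Type*} [Fintype n] [DecidableEq n]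
    (A : Matrix n n ℂ) : ℝ :=
  (((Matrix.posSemidef_conjTranspose_mul_self A).1.eigenvectorUnitary.1 *
      Matrix.diagonal (((↑) : ℝ → ℂ) ∘ Real.sqrt ∘ (Matrix.posSemidef_conjTranspose_mul_self A).1.eigenvalues) *
      (star (Matrix.posSemidef_conjTranspose_mul_self A).1.eigenvectorUnitary : Matrix n n ℂ)).trace).re

/-!
The states `|τ²⟩, |τ³⟩, |τ⁴⟩` are orthonormal and `|τ¹⟩ = (|τ²⟩ − i|τ³⟩)/√2`. The trace norm is
invariant under isometric embeddings, so it may be computed in the coordinates of that frame,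
where both operators `τ¹ ± (τ² − τ³) − τ⁴` become `M ⊕ (−1)` with `M` a `2 × 2` Hermitian matrix of
trace `1` and determinant `−1`. Hence `M² = M + 1`, the eigenvalues of `M` are `(1 ± √5)/2`, and
each trace norm is `√5 + 1`.
-/

open scoped MatrixOrder

section TraceNorm

variable {m n : Type*} [Fintype m] [Fintype n] [DecidableEq n]

theorem traceNorm_eq_re_trace {S A : Matrix n n ℂ} (hS : S.PosSemidef) (h : S * S = Aᴴ * A) :
    traceNorm A = S.trace.re := by
  have hH := (posSemidef_conjTranspose_mul_self A).1
  have hcfc : hH.eigenvectorUnitary.1 * diagonal (((↑) : ℝ → ℂ) ∘ Real.sqrt ∘ hH.eigenvalues) *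
      (star hH.eigenvectorUnitary : Matrix n n ℂ) = cfc Real.sqrt (Aᴴ * A) := by
    rw [hH.cfc_eq, IsHermitian.cfc, Unitary.conjStarAlgAut_apply]; rfl
  have hsqrt : cfc Real.sqrt (Aᴴ * A) = S := by
    rw [← cfcₙ_eq_cfc, ← CFC.sqrt_eq_real_sqrt _ (posSemidef_conjTranspose_mul_self A).nonneg]
    exact CFC.sqrt_unique h hS.nonneg
  rw [traceNorm, hcfc, hsqrt]

theorem traceNorm_conj_isometry [DecidableEq m] {E : Matrix m n ℂ} (hE : Eᴴ * E = 1)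
    (A : Matrix n n ℂ) : traceNorm (E * A * Eᴴ) = traceNorm A := by
  have hAA := (posSemidef_conjTranspose_mul_self A).nonneg
  set S := CFC.sqrt (Aᴴ * A)
  have hS : S.PosSemidef := (CFC.sqrt_nonneg _).posSemidef
  have hSS : S * S = Aᴴ * A := CFC.sqrt_mul_sqrt_self _ hAA
  have hconj : (E * S * Eᴴ) * (E * S * Eᴴ) = (E * A * Eᴴ)ᴴ * (E * A * Eᴴ) := by
    simp only [conjTranspose_mul, conjTranspose_conjTranspose, Matrix.mul_assoc]
    rw [← Matrix.mul_assoc Eᴴ E, hE, Matrix.one_mul, ← Matrix.mul_assoc Eᴴ E, hE, Matrix.one_mul,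
      ← Matrix.mul_assoc S S, hSS, Matrix.mul_assoc]
  have htrace : (E * S * Eᴴ).trace = S.trace := by
    rw [trace_mul_comm, ← Matrix.mul_assoc, hE, Matrix.one_mul]
  rw [traceNorm_eq_re_trace (hS.mul_mul_conjTranspose_same E) hconj, htrace,
    traceNorm_eq_re_trace hS hSS]

end TraceNorm

theorem vecMulVec_mulVec_star {m n : Type*} [Fintype n] (E : Matrix m n ℂ) (c : n → ℂ) :
    vecMulVec (E *ᵥ c) (star (E *ᵥ c)) = E * vecMulVec c (star c) * Eᴴ := by
  rw [mul_vecMulVec, vecMulVec_mul, star_mulVec]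

theorem ofReal_sqrt_inv_sq {x : ℝ} (hx : 0 ≤ x) : ((Real.sqrt x : ℝ) : ℂ)⁻¹ ^ 2 = (x : ℂ)⁻¹ := by
  rw [inv_pow, ← Complex.ofReal_pow, Real.sq_sqrt hx]

noncomputable def tauFrame : Matrix (Fin 2 × Fin 2) (Fin 3) ℂ := of fun p k => tauVec k.succ p

noncomputable def tauCoord : Fin 4 → Fin 3 → ℂ :=
  ![![((Real.sqrt 2 : ℝ) : ℂ)⁻¹, -Complex.I * ((Real.sqrt 2 : ℝ) : ℂ)⁻¹, 0], ![1, 0, 0],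
    ![0, 1, 0], ![0, 0, 1]]

noncomputable def tauCoordOp (x : Fin 4) : Matrix (Fin 3) (Fin 3) ℂ :=
  vecMulVec (tauCoord x) (star (tauCoord x))

theorem tauFrame_isometry : tauFrameᴴ * tauFrame = 1 := by
  have h2 := ofReal_sqrt_inv_sq (x := 2) (by norm_num)
  push_cast at h2
  ext i j
  fin_cases i <;> fin_cases j <;>
    simp [tauFrame, tauVec, Urac, phiMax, pauliX, pauliY, mul_apply, Fintype.sum_prod_type,
      Fin.sum_univ_two, Complex.conj_ofReal] <;> grind [Complex.I_sq]

theorem tauVec_eq_tauFrame_mulVec (x : Fin 4) : tauVec x = tauFrame *ᵥ tauCoord x := by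
  ext ⟨a, b⟩
  fin_cases x <;> fin_cases a <;> fin_cases b <;>
    simp [tauFrame, tauCoord, tauVec, Urac, phiMax, pauliX, pauliY, mulVec, dotProduct,
      Fin.sum_univ_three] <;> ring

theorem tauOp_eq_tauFrame_conj (x : Fin 4) : tauOp x = tauFrame * tauCoordOp x * tauFrameᴴ := by
  rw [tauCoordOp, ← vecMulVec_mulVec_star, ← tauVec_eq_tauFrame_mulVec]
  rfl

theorem tauCoordOp_eq : tauCoordOp =
    ![!![1 / 2, Complex.I / 2, 0; -Complex.I / 2, 1 / 2, 0; 0, 0, 0],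
      !![1, 0, 0; 0, 0, 0; 0, 0, 0], !![0, 0, 0; 0, 1, 0; 0, 0, 0],
      !![0, 0, 0; 0, 0, 0; 0, 0, 1]] := by
  have h2 := ofReal_sqrt_inv_sq (x := 2) (by norm_num)
  push_cast at h2
  funext x
  ext i j
  fin_cases x <;> fin_cases i <;> fin_cases j <;>
    simp only [tauCoordOp, tauCoord, vecMulVec_apply, Pi.star_apply] <;>
    simp [Complex.conj_ofReal] <;> grind [Complex.I_sq]

theorem traceNorm_tauCoordOp_combination {ε : ℝ} (hε : ε ^ 2 = 1) :
    traceNorm (tauCoordOp 0 + ε • (tauCoordOp 1 - tauCoordOp 2) - tauCoordOp 3) =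
      1 + Real.sqrt 5 := by
  -- The modulus `|M| ⊕ 1`, where `|M| = (M + 2)/√5` follows from `M² = M + 1`.
  set S : Matrix (Fin 3) (Fin 3) ℂ :=
    (Real.sqrt 5)⁻¹ • (tauCoordOp 0 + (2 + ε) • tauCoordOp 1 + (2 - ε) • tauCoordOp 2) +
      tauCoordOp 3
  have hS : S.PosSemidef := by
    have hC (x : Fin 4) : (tauCoordOp x).PosSemidef := posSemidef_vecMulVec_self_star _
    have hplus : 0 ≤ 2 + ε := by nlinarith
    have hminus : 0 ≤ 2 - ε := by nlinarith
    exact ((((hC 0).add ((hC 1).smul hplus)).add ((hC 2).smul hminus)).smul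
      (by positivity)).add (hC 3)
  rw [traceNorm_eq_re_trace hS]
  · have htr (x : Fin 4) : (tauCoordOp x).trace = 1 := by
      fin_cases x <;> simp [tauCoordOp_eq, trace, Fin.sum_univ_three, ← two_mul]
    simp [S, htr, Complex.real_smul]
    ring
  · have h5 := ofReal_sqrt_inv_sq (x := 5) (by norm_num)
    push_cast at h5
    have hε' : (ε : ℂ) ^ 2 = 1 := by exact_mod_cast hε
    simp only [S, tauCoordOp_eq]
    ext i j
    fin_cases i <;> fin_cases j <;>
      simp [mul_apply, Fin.sum_univ_three, map_ofNat] <;> grind [Complex.I_sq]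

theorem traceNorm_tauOp_combination {ε : ℝ} (hε : ε ^ 2 = 1) :
    traceNorm (tauOp 0 + ε • (tauOp 1 - tauOp 2) - tauOp 3) = 1 + Real.sqrt 5 := by
  have hconj : tauOp 0 + ε • (tauOp 1 - tauOp 2) - tauOp 3 =
      tauFrame * (tauCoordOp 0 + ε • (tauCoordOp 1 - tauCoordOp 2) - tauCoordOp 3) * tauFrameᴴ := by
    simp only [tauOp_eq_tauFrame_conj, Matrix.mul_add, Matrix.add_mul, Matrix.mul_sub,
      Matrix.sub_mul, Matrix.mul_smul, Matrix.smul_mul]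
  rw [hconj, traceNorm_conj_isometry tauFrame_isometry, traceNorm_tauCoordOp_combination hε]

/-- `Tr|τ¹+τ²−τ³−τ⁴| + Tr|τ¹−τ²+τ³−τ⁴| = 2(1+√5)`. -/
theorem rac_trace_norm_value :
    traceNorm (tauOp 0 + tauOp 1 - tauOp 2 - tauOp 3) +
      traceNorm (tauOp 0 - tauOp 1 + tauOp 2 - tauOp 3) = 2 * (1 + Real.sqrt 5) := by
  have hA : tauOp 0 + tauOp 1 - tauOp 2 - tauOp 3 =
      tauOp 0 + (1 : ℝ) • (tauOp 1 - tauOp 2) - tauOp 3 := by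
    rw [one_smul]; abel
  have hB : tauOp 0 - tauOp 1 + tauOp 2 - tauOp 3 =
      tauOp 0 + (-1 : ℝ) • (tauOp 1 - tauOp 2) - tauOp 3 := by
    rw [neg_one_smul]; abel
  rw [hA, hB, traceNorm_tauOp_combination (by norm_num), traceNorm_tauOp_combination (by norm_num)]
  ring
end

section
/- Let $x$ be uniformly distributed over $n_X$ values and suppose Bob can guess $x$ with certainty from the state τˣ_{CB} of an entanglement-assisted d-dimensional quantum communication protocol (states with common marginal τ_B on H_B and dim H_C = d). Then n_X ≤ d². In particular, with EA qubit communication (d = 2) at most 4 inputs can be perfectly distinguished, so perfect discrimination of 5 inputs is impossible. -/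
open Matrix BigOperators
open scoped ComplexOrder

/-!
Every state is dominated by its marginal: for `M ≥ 0` on `C × B`, `M ≤ d • (1 ⊗ Tr_C M)`.
Indeed, writing `1 = ∑ c, P c` with `P c = |c⟩⟨c| ⊗ 1`, Cauchy–Schwarz gives
`M ≤ d • ∑ c, P c * M * P c`, and each pinched block `P c * M * P c` is one of the `d²`
nonnegative terms `(|c'⟩⟨c| ⊗ 1)ᴴ * M * (|c'⟩⟨c| ⊗ 1)` that sum to `1 ⊗ Tr_C M`.
With a common marginal `ρ`, every `τ x` lies below `σ = d • (1 ⊗ ρ)`, whose trace is `d²`;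
summing `Tr (τ x * N x) ≤ Tr (σ * N x)` over the POVM gives `n_X ≤ Tr σ = d²`.
-/

open scoped Kronecker MatrixOrder

namespace Matrix

variable {𝕜 n : Type*} [RCLike 𝕜] [Fintype n]

lemma two_smul_card_smul_sum_sub_eq_sum_sum {m ι : Type*} [Fintype ι] (M : Matrix n n 𝕜)
    (Q : ι → Matrix n m 𝕜) :
    (2 : 𝕜) • (Fintype.card ι • ∑ i, (Q i)ᴴ * M * Q i - (∑ i, Q i)ᴴ * M * ∑ i, Q i) =
      ∑ i, ∑ j, (Q i - Q j)ᴴ * M * (Q i - Q j) := by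
  simp only [conjTranspose_sub, conjTranspose_sum, Matrix.sub_mul, Matrix.mul_sub,
    Matrix.sum_mul, Matrix.mul_sum, Finset.sum_sub_distrib, Finset.sum_const, Finset.card_univ]
  rw [Finset.sum_comm (f := fun i j => (Q j)ᴴ * M * Q i), ← Finset.smul_sum]
  module

lemma conjTranspose_sum_mul_mul_sum_le {m ι : Type*} [Fintype m] [Fintype ι]
    {M : Matrix n n 𝕜} (hM : M.PosSemidef) (Q : ι → Matrix n m 𝕜) :
    (∑ i, Q i)ᴴ * M * ∑ i, Q i ≤ Fintype.card ι • ∑ i, (Q i)ᴴ * M * Q i := by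
  have hdouble : ((2 : 𝕜) • (Fintype.card ι • ∑ i, (Q i)ᴴ * M * Q i -
      (∑ i, Q i)ᴴ * M * ∑ i, Q i)).PosSemidef := by
    rw [two_smul_card_smul_sum_sub_eq_sum_sum]
    exact posSemidef_sum _ fun i _ => posSemidef_sum _ fun j _ =>
      hM.conjTranspose_mul_mul_same _
  rw [le_iff]
  simpa [smul_smul] using hdouble.smul (a := (2 : 𝕜)⁻¹) (by positivity)

lemma trace_mul_le_trace_mul_of_le [DecidableEq n] {A A' N : Matrix n n 𝕜} (hA : A ≤ A')
    (hN : N.PosSemidef) :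
    (A * N).trace ≤ (A' * N).trace := by
  obtain ⟨X, rfl⟩ := CStarAlgebra.nonneg_iff_eq_star_mul_self.mp hN.nonneg
  rw [← sub_nonneg, ← trace_sub, ← Matrix.sub_mul, ← Matrix.mul_assoc, trace_mul_cycle]
  exact ((le_iff.mp hA).mul_mul_conjTranspose_same X).trace_nonneg

lemma sum_trace_mul_le_trace_of_forall_le {ι : Type*} [Fintype ι] [DecidableEq n]
    {ρ N : ι → Matrix n n 𝕜} {σ : Matrix n n 𝕜} (hρ : ∀ i, ρ i ≤ σ)
    (hN : ∀ i, (N i).PosSemidef) (hNsum : ∑ i, N i = 1) :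
    ∑ i, (ρ i * N i).trace ≤ σ.trace :=
  calc ∑ i, (ρ i * N i).trace
      ≤ ∑ i, (σ * N i).trace := Finset.sum_le_sum fun i _ =>
        trace_mul_le_trace_mul_of_le (hρ i) (hN i)
    _ = σ.trace := by rw [← trace_sum, ← Matrix.mul_sum, hNsum, Matrix.mul_one]

end Matrix

lemma trace_ptraceC {C B : Type*} [Fintype C] [Fintype B] (M : Matrix (C × B) (C × B) ℂ) :
    (ptraceC M).trace = M.trace := by
  simp only [ptraceC, trace, diag_apply, of_apply, Fintype.sum_prod_type]
  exact Finset.sum_comm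

section PartialTrace

variable {C B : Type*} [Fintype C] [DecidableEq C] [DecidableEq B]

lemma sum_single_kronecker_one {R : Type*} [Semiring R] :
    ∑ c : C, single c c (1 : R) ⊗ₖ (1 : Matrix B B R) = 1 := by
  ext ⟨a, i⟩ ⟨b, j⟩
  simp only [Matrix.sum_apply, kronecker_apply, single_apply, one_apply, ite_and, ite_mul, one_mul,
    zero_mul, Finset.sum_ite_eq', Finset.mem_univ, if_true, Prod.mk.injEq]

lemma conjTranspose_single_kronecker_one_mul_mul [Fintype B] {R : Type*} [CommSemiring R]
    [StarRing R] (M : Matrix (C × B) (C × B) R) (c' c : C) :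
    (single c' c (1 : R) ⊗ₖ (1 : Matrix B B R))ᴴ * M * (single c' c 1 ⊗ₖ 1) =
      single c c 1 ⊗ₖ M.submatrix (Prod.mk c') (Prod.mk c') := by
  ext ⟨a, i⟩ ⟨b, j⟩
  simp only [conjTranspose_kronecker, conjTranspose_single, star_one, conjTranspose_one,
    Matrix.mul_apply, kroneckerMap_apply, single_apply, ite_and, one_apply, mul_ite, mul_one,
    mul_zero, ite_mul, one_mul, zero_mul, Fintype.sum_prod_type, Finset.sum_ite_eq,
    Finset.sum_ite_eq', Finset.mem_univ, if_true, Finset.sum_ite_irrel, Finset.sum_const_zero,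
    submatrix_apply]
  simp only [← ite_and, and_comm]

lemma one_kronecker_ptraceC_eq_sum [Fintype B] (M : Matrix (C × B) (C × B) ℂ) :
    1 ⊗ₖ ptraceC M =
      ∑ c, ∑ c', (single c' c (1 : ℂ) ⊗ₖ (1 : Matrix B B ℂ))ᴴ * M * (single c' c 1 ⊗ₖ 1) := by
  simp only [conjTranspose_single_kronecker_one_mul_mul]
  ext ⟨a, i⟩ ⟨b, j⟩
  simp [Matrix.sum_apply, single_apply, one_apply, ptraceC, ite_and]

lemma le_card_smul_one_kronecker_ptraceC [Fintype B] {M : Matrix (C × B) (C × B) ℂ}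
    (hM : M.PosSemidef) : M ≤ Fintype.card C • (1 ⊗ₖ ptraceC M) :=
  calc M = (∑ c : C, single c c (1 : ℂ) ⊗ₖ (1 : Matrix B B ℂ))ᴴ * M *
        ∑ c : C, single c c (1 : ℂ) ⊗ₖ (1 : Matrix B B ℂ) := by
        rw [sum_single_kronecker_one, conjTranspose_one, Matrix.one_mul, Matrix.mul_one]
    _ ≤ Fintype.card C • ∑ c : C, (single c c (1 : ℂ) ⊗ₖ (1 : Matrix B B ℂ))ᴴ * M *
        (single c c 1 ⊗ₖ 1) := conjTranspose_sum_mul_mul_sum_le hM _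
    _ ≤ Fintype.card C • (1 ⊗ₖ ptraceC M) := by
        rw [one_kronecker_ptraceC_eq_sum]
        gcongr with c
        exact Finset.single_le_sum (fun c' _ => (hM.conjTranspose_mul_mul_same _).nonneg)
          (Finset.mem_univ c)

end PartialTrace

/-- if Bob can perfectly guess a uniformly distributed `x` (with `n_X`
values) from the states `τˣ` of an EA `d`-dimensional quantum communication protocol
(density operators on `H_C ⊗ H_B` with `dim H_C = d` and a common marginal on `H_B`),
then `n_X ≤ d²`. In particular (d = 2) at most 4 inputs can be perfectly distinguished,
so perfect discrimination of 5 inputs is impossible with an EA qubit. -/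
theorem perfect_guessing_dimension_bound {C B : Type*} [Fintype C] [Fintype B]
    [DecidableEq C] [DecidableEq B]
    (nX d : ℕ) (hd : Fintype.card C = d)
    (τ : Fin nX → Matrix (C × B) (C × B) ℂ)
    (hτpsd : ∀ x, (τ x).PosSemidef) (hτtr : ∀ x, (τ x).trace = 1)
    (hmarg : ∀ x x', ptraceC (τ x) = ptraceC (τ x'))
    (N : Fin nX → Matrix (C × B) (C × B) ℂ)
    (hNpsd : ∀ x, (N x).PosSemidef) (hNsum : ∑ x, N x = 1)
    (hperfect : ∀ x, (τ x * N x).trace = 1) :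
    nX ≤ d ^ 2 := by
  rcases Nat.eq_zero_or_pos nX with rfl | hpos
  · exact Nat.zero_le _
  let x₀ : Fin nX := ⟨0, hpos⟩
  have hdom : ∀ x, τ x ≤ d • (1 ⊗ₖ ptraceC (τ x₀)) := fun x => by
    simpa only [hmarg x x₀, hd] using le_card_smul_one_kronecker_ptraceC (hτpsd x)
  have hbound := sum_trace_mul_le_trace_of_forall_le hdom hNpsd hNsum
  rw [trace_smul, trace_kronecker, trace_one, trace_ptraceC, hτtr, hd] at hbound
  simp only [hperfect, Finset.sum_const, Finset.card_univ, Fintype.card_fin, nsmul_eq_mul,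
    mul_one] at hbound
  rw [sq]
  exact_mod_cast hbound
end
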